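/- The expression claimed by Leipnik for the lognormal characteristic function is incorrect: for any k < 0, the function ψ(t) := (1/(2π)) ∫_{k-i∞}^{k+i∞} sin(πs) Γ(s) exp(-(ln t + iπ/2)s + (σ²/2)s²) ds satisfies ψ(t) = O(t^{|k|}) as t → 0⁺; in particular ψ(t) → 0 as t → 0⁺, whereas the characteristic function of a lognormal random variable tends to 1 as t → 0⁺. -/

import Mathlib

open MeasureTheory Complex Set Filter Asymptotics

/-- Leipnik's claimed expression for the lognormal characteristic function, as a
contour integral along the vertical line Re(s) = k (here (1/(2πi)) ds with
s = k+iu becomes (1/(2π)) du). -/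
noncomputable def leipnikExpr (σ k : ℝ) (t : ℝ) : ℂ :=
  (1 / (2 * Real.pi)) * ∫ u : ℝ,
    Complex.sin (Real.pi * (k + u * Complex.I)) * Complex.Gamma (k + u * Complex.I) *
      Complex.exp (-(↑(Real.log t) + Complex.I * Real.pi / 2) * (k + u * Complex.I)
        + (σ:ℂ)^2 / 2 * (k + u * Complex.I)^2)

/-! On the line `s = k + iu` the factor `exp (-(log t) s) = t^{-s}` of the integrand has modulus
`t^{-k} = t^{|k|}` independently of `u`, so pulling it out of the integral bounds `ψ(t)` by a
constant multiple of `t^{|k|}`, which tends to `0` as `t → 0⁺` because `k < 0`. -/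

noncomputable def leipnikKernel (σ k u : ℝ) : ℂ :=
  Complex.sin (Real.pi * (k + u * Complex.I)) * Complex.Gamma (k + u * Complex.I) *
    Complex.exp (-(Complex.I * Real.pi / 2) * (k + u * Complex.I)
      + (σ:ℂ)^2 / 2 * (k + u * Complex.I)^2)

lemma leipnikExpr_eq_integral_exp_mul_kernel (σ k t : ℝ) :
    leipnikExpr σ k t = (1 / (2 * Real.pi)) * ∫ u : ℝ,
      Complex.exp (-(Real.log t : ℂ) * (k + u * Complex.I)) * leipnikKernel σ k u := by
  unfold leipnikExpr leipnikKernel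
  congr 1
  refine integral_congr_ae (Eventually.of_forall fun u => ?_)
  dsimp only
  rw [mul_left_comm, ← Complex.exp_add]
  ring_nf

lemma norm_exp_neg_log_mul {t : ℝ} (ht : 0 < t) (s : ℂ) :
    ‖Complex.exp (-(Real.log t : ℂ) * s)‖ = t ^ (-s.re) := by
  rw [Complex.norm_exp, Real.rpow_def_of_pos ht]
  simp [Complex.mul_re]

lemma norm_leipnikExpr_le (σ k : ℝ) {t : ℝ} (ht : 0 < t) :
    ‖leipnikExpr σ k t‖ ≤ (1 / (2 * Real.pi)) * (∫ u : ℝ, ‖leipnikKernel σ k u‖) * t ^ (-k) := by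
  have hfactor : ∀ u : ℝ,
      ‖Complex.exp (-(Real.log t : ℂ) * (k + u * Complex.I)) * leipnikKernel σ k u‖
        = t ^ (-k) * ‖leipnikKernel σ k u‖ := fun u => by
    rw [norm_mul, norm_exp_neg_log_mul ht]
    simp
  have hconst : ‖(1 / (2 * Real.pi) : ℂ)‖ = 1 / (2 * Real.pi) := by
    simp [Real.pi_pos.le]
  rw [leipnikExpr_eq_integral_exp_mul_kernel, norm_mul, hconst, mul_assoc]
  gcongr
  calc _ ≤ ∫ u : ℝ, ‖Complex.exp (-(Real.log t : ℂ) * (k + u * Complex.I)) * leipnikKernel σ k u‖ :=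
        norm_integral_le_integral_norm _
    _ = ∫ u : ℝ, t ^ (-k) * ‖leipnikKernel σ k u‖ := integral_congr_ae (.of_forall hfactor)
    _ = _ := by rw [integral_const_mul, mul_comm]

theorem leipnik_expr_tendsto_zero_general (σ k : ℝ) (hk : k < 0) :
    (fun t : ℝ => leipnikExpr σ k t) =O[nhdsWithin 0 (Ioi 0)]
      (fun t : ℝ => t ^ |k|) ∧
    Tendsto (fun t : ℝ => leipnikExpr σ k t) (nhdsWithin 0 (Ioi 0)) (nhds 0) := by
  have hbig : (fun t : ℝ => leipnikExpr σ k t) =O[nhdsWithin 0 (Ioi 0)] (fun t : ℝ => t ^ |k|) := by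
    refine IsBigO.of_bound ((1 / (2 * Real.pi)) * ∫ u : ℝ, ‖leipnikKernel σ k u‖)
      (eventually_nhdsWithin_of_forall fun t (ht : 0 < t) => ?_)
    rw [Real.norm_of_nonneg (Real.rpow_nonneg ht.le _), abs_of_neg hk]
    exact norm_leipnikExpr_le σ k ht
  have hpow : Tendsto (fun t : ℝ => t ^ |k|) (nhdsWithin 0 (Ioi 0)) (nhds 0) := by
    have := (Real.continuousAt_rpow_const 0 |k| (Or.inr (abs_nonneg k))).tendsto
    rw [Real.zero_rpow (abs_ne_zero.mpr hk.ne)] at this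
    exact this.mono_left nhdsWithin_le_nhds
  exact ⟨hbig, hbig.trans_tendsto hpow⟩

/-- Leipnik's expression is incorrect: for any k < 0, the function ψ(t) given by
the contour integral satisfies ψ(t) = O(t^{|k|}) as t → 0⁺, in particular
ψ(t) → 0 as t → 0⁺, whereas a characteristic function must tend to 1. -/
theorem leipnik_expr_tendsto_zero (σ k : ℝ) (hσ : 0 < σ) (hk : k < 0) :
    (fun t : ℝ => leipnikExpr σ k t) =O[nhdsWithin 0 (Ioi 0)]
      (fun t : ℝ => t ^ |k|) ∧
    Tendsto (fun t : ℝ => leipnikExpr σ k t) (nhdsWithin 0 (Ioi 0)) (nhds 0) :=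
  leipnik_expr_tendsto_zero_general σ k hk
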